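/- arXiv:1710.11244 — 5 statements merged into one kernel-verified Lean document; each statement's English description precedes it below -/
import Mathlib

section
/- Let $\{u_j\}_{j=0}^n$ be a Chebyshev set on $[a,b]$ and suppose a nonzero moment vector $\mathbf{c} \in \mathbb{R}^{n+1}$ admits a representation $\mathbf{c} = \sum_{i=1}^p \lambda_i (u_0(t_i),\ldots,u_n(t_i))$ with $\lambda_i > 0$, distinct points $t_i \in [a,b]$, and $2p \le n+1$ (counting interior points). Then this representation is unique: any other representation with positive weights and at most that many points uses the same points and weights. -/
open Finset in
private lemma fiber_sum_aux {m N : ℕ} (f pts : Fin m → ℝ) (τ : Fin N → ℝ)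
    (hτ : Function.Injective τ) (g : Fin m → Fin N) (hg : ∀ i, τ (g i) = pts i) (F : ℝ → ℝ) :
    ∑ k, (∑ i ∈ Finset.univ.filter (fun i => pts i = τ k), f i) * F (τ k)
      = ∑ i, f i * F (pts i) := by
  classical
  have h1 : ∀ k, Finset.univ.filter (fun i => pts i = τ k)
      = Finset.univ.filter (fun i => g i = k) := by
    intro k; ext i
    simp only [Finset.mem_filter, Finset.mem_univ, true_and, ← hg i, hτ.eq_iff]
  calc ∑ k, (∑ i ∈ Finset.univ.filter (fun i => pts i = τ k), f i) * F (τ k)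
      = ∑ k, ∑ i ∈ Finset.univ.filter (fun i => g i = k), f i * F (pts i) := by
        refine Finset.sum_congr rfl fun k _ => ?_
        rw [h1, Finset.sum_mul]
        refine Finset.sum_congr rfl fun i hi => ?_
        simp only [Finset.mem_filter] at hi
        rw [← hi.2, hg]
    _ = ∑ i, f i * F (pts i) :=
        Finset.sum_fiberwise_of_maps_to (fun i _ => Finset.mem_univ (g i)) _

/-- Uniqueness of small-index representations over a Chebyshev set: a nonzero
moment vector with a positive-weight representation using `p` distinct points,
`2p ≤ n + 1`, admits no other such representation with at most `p` points. -/
theorem chebyshev_representation_unique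
    (n : ℕ) (a b : ℝ) (hab : a < b) (u : Fin (n + 1) → ℝ → ℝ)
    (hcont : ∀ j, ContinuousOn (u j) (Set.Icc a b))
    (hcheb : ∀ c : Fin (n + 1) → ℝ, c ≠ 0 →
      ∀ t : Fin (n + 1) → ℝ, StrictMono t → (∀ i, t i ∈ Set.Icc a b) →
        ¬ (∀ i, ∑ j, c j * u j (t i) = 0))
    (c : Fin (n + 1) → ℝ) (hc : c ≠ 0)
    (p : ℕ) (hp : 2 * p ≤ n + 1)
    (lam : Fin p → ℝ) (t : Fin p → ℝ)
    (hlam : ∀ i, 0 < lam i) (ht : StrictMono t) (htab : ∀ i, t i ∈ Set.Icc a b)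
    (hrep : ∀ j, c j = ∑ i, lam i * u j (t i))
    (q : ℕ) (hq : q ≤ p)
    (mu : Fin q → ℝ) (s : Fin q → ℝ)
    (hmu : ∀ i, 0 < mu i) (hs : StrictMono s) (hsab : ∀ i, s i ∈ Set.Icc a b)
    (hrep' : ∀ j, c j = ∑ i, mu i * u j (s i)) :
    ∃ h : q = p, ∀ i : Fin q,
      s i = t (Fin.cast h i) ∧ mu i = lam (Fin.cast h i) := by
  classical
  have htinj : Function.Injective t := ht.injective
  have hsinj : Function.Injective s := hs.injective
  set S : Finset ℝ := Finset.image t Finset.univ ∪ Finset.image s Finset.univ with hSdef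
  have hScard : S.card ≤ n + 1 := by
    calc S.card ≤ (Finset.image t Finset.univ).card + (Finset.image s Finset.univ).card := by
          rw [hSdef]; exact Finset.card_union_le _ _
      _ = p + q := by
          rw [Finset.card_image_of_injective _ htinj, Finset.card_image_of_injective _ hsinj]
          simp
      _ ≤ n + 1 := by omega
  have hSsub : (↑S : Set ℝ) ⊆ Set.Icc a b := by
    intro x hx
    simp only [hSdef, Finset.coe_union, Set.mem_union, Finset.coe_image, Set.mem_image,
      Finset.mem_coe, Finset.mem_univ, true_and, Finset.coe_univ, Set.image_univ,
      Set.mem_range] at hx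
    rcases hx with ⟨i, rfl⟩ | ⟨i, rfl⟩
    · exact htab i
    · exact hsab i
  have hinf : (Set.Icc a b).Infinite := Set.Icc_infinite hab
  obtain ⟨T', hST', hT'sub, hT'card⟩ :=
    hinf.exists_superset_ncard_eq (k := n + 1) hSsub S.finite_toSet
      (by simpa [Set.ncard_coe_finset] using hScard)
  have hT'fin : T'.Finite := Set.finite_of_ncard_ne_zero (by omega)
  set T : Finset ℝ := hT'fin.toFinset with hTdef
  have hTcard : T.card = n + 1 := by
    rw [← Set.ncard_eq_toFinset_card _ hT'fin]; exact hT'card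
  set τ : Fin (n + 1) → ℝ := fun k => T.orderEmbOfFin hTcard k with hτdef
  have hτmono : StrictMono τ := (T.orderEmbOfFin hTcard).strictMono
  have hτinj : Function.Injective τ := hτmono.injective
  have hτab : ∀ k, τ k ∈ Set.Icc a b := fun k =>
    hT'sub (hT'fin.mem_toFinset.1 (Finset.orderEmbOfFin_mem T hTcard k))
  have hmemT : ∀ x ∈ S, ∃ k, τ k = x := by
    intro x hx
    have hxT : x ∈ T := hT'fin.mem_toFinset.2 (hST' hx)
    have : x ∈ Set.range τ := by
      rw [hτdef]
      show x ∈ Set.range (T.orderEmbOfFin hTcard)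
      rw [Finset.range_orderEmbOfFin]; exact hxT
    exact this
  have htS : ∀ i, t i ∈ S := fun i => by
    simp [hSdef, Finset.mem_union, Finset.mem_image]
  have hsS : ∀ i, s i ∈ S := fun i => by
    simp [hSdef, Finset.mem_union, Finset.mem_image]
  choose gt hgt using fun i : Fin p => hmemT (t i) (htS i)
  choose gs hgs using fun i : Fin q => hmemT (s i) (hsS i)
  set A : Fin (n + 1) → ℝ :=
    fun k => ∑ i ∈ Finset.univ.filter (fun i => t i = τ k), lam i with hAdef
  set B : Fin (n + 1) → ℝ :=
    fun k => ∑ i ∈ Finset.univ.filter (fun i => s i = τ k), mu i with hBdef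
  have hsumA : ∀ j, ∑ k, A k * u j (τ k) = ∑ i, lam i * u j (t i) :=
    fun j => fiber_sum_aux lam t τ hτinj gt hgt (u j)
  have hsumB : ∀ j, ∑ k, B k * u j (τ k) = ∑ i, mu i * u j (s i) :=
    fun j => fiber_sum_aux mu s τ hτinj gs hgs (u j)
  set w : Fin (n + 1) → ℝ := fun k => A k - B k with hwdef
  have hw0 : ∀ j, ∑ k, w k * u j (τ k) = 0 := by
    intro j
    have : ∑ k, w k * u j (τ k) = ∑ k, A k * u j (τ k) - ∑ k, B k * u j (τ k) := by
      rw [← Finset.sum_sub_distrib]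
      exact Finset.sum_congr rfl fun k _ => by rw [hwdef, sub_mul]
    rw [this, hsumA, hsumB, ← hrep, ← hrep', sub_self]
  set M : Matrix (Fin (n + 1)) (Fin (n + 1)) ℝ := Matrix.of fun k j => u j (τ k) with hMdef
  have hdet : M.det ≠ 0 := by
    intro hdet
    obtain ⟨v, hv0, hv⟩ := Matrix.exists_mulVec_eq_zero_iff.2 hdet
    refine hcheb v hv0 τ hτmono hτab fun k => ?_
    have hk := congrFun hv k
    simpa [hMdef, Matrix.mulVec, dotProduct, mul_comm] using hk
  have hwz : ∀ k, w k = 0 := by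
    by_contra hne
    push_neg at hne
    obtain ⟨k0, hk0⟩ := hne
    have hwne : w ≠ 0 := fun h => hk0 (by rw [h]; rfl)
    have hdetT : M.transpose.det = 0 := by
      rw [Matrix.exists_mulVec_eq_zero_iff.symm]
      refine ⟨w, hwne, ?_⟩
      funext j
      have := hw0 j
      simpa [hMdef, Matrix.mulVec, dotProduct, Matrix.transpose, mul_comm] using this
    rw [Matrix.det_transpose] at hdetT
    exact hdet hdetT
  have hAB : ∀ k, A k = B k := fun k => sub_eq_zero.1 (hwz k)
  have hA_at : ∀ i : Fin p, A (gt i) = lam i := by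
    intro i
    have hfil : Finset.univ.filter (fun i' => t i' = τ (gt i)) = {i} := by
      ext i'
      simp [hgt i, htinj.eq_iff]
    rw [hAdef]
    simp only [hfil, Finset.sum_singleton]
  have hB_at : ∀ i : Fin q, B (gs i) = mu i := by
    intro i
    have hfil : Finset.univ.filter (fun i' => s i' = τ (gs i)) = {i} := by
      ext i'
      simp [hgs i, hsinj.eq_iff]
    rw [hBdef]
    simp only [hfil, Finset.sum_singleton]
  -- each t i is some s j with equal weight
  have himt : ∀ i : Fin p, ∃ j : Fin q, s j = t i ∧ mu j = lam i := by
    intro i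
    have hBpos : 0 < B (gt i) := by rw [← hAB, hA_at i]; exact hlam i
    have hne : (Finset.univ.filter (fun j => s j = τ (gt i))).Nonempty := by
      by_contra h
      rw [Finset.not_nonempty_iff_eq_empty] at h
      rw [hBdef] at hBpos
      simp only [h, Finset.sum_empty] at hBpos
      exact lt_irrefl 0 hBpos
    obtain ⟨j, hj⟩ := hne
    simp only [Finset.mem_filter, Finset.mem_univ, true_and] at hj
    have hfil : Finset.univ.filter (fun j' => s j' = τ (gt i)) = {j} := by
      ext j'
      simp [← hj, hsinj.eq_iff]
    have hBval : B (gt i) = mu j := by rw [hBdef]; simp only [hfil, Finset.sum_singleton]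
    exact ⟨j, by rw [hj, hgt], by rw [← hBval, ← hAB, hA_at]⟩
  have hims : ∀ j : Fin q, ∃ i : Fin p, t i = s j := by
    intro j
    have hApos : 0 < A (gs j) := by rw [hAB, hB_at j]; exact hmu j
    have hne : (Finset.univ.filter (fun i => t i = τ (gs j))).Nonempty := by
      by_contra h
      rw [Finset.not_nonempty_iff_eq_empty] at h
      rw [hAdef] at hApos
      simp only [h, Finset.sum_empty] at hApos
      exact lt_irrefl 0 hApos
    obtain ⟨i, hi⟩ := hne
    simp only [Finset.mem_filter, Finset.mem_univ, true_and] at hi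
    exact ⟨i, by rw [hi, hgs]⟩
  -- images are equal
  have himeq : Finset.image s Finset.univ = Finset.image t Finset.univ := by
    apply Finset.Subset.antisymm
    · intro x hx
      simp only [Finset.mem_image, Finset.mem_univ, true_and] at hx ⊢
      obtain ⟨j, rfl⟩ := hx
      obtain ⟨i, hi⟩ := hims j
      exact ⟨i, hi⟩
    · intro x hx
      simp only [Finset.mem_image, Finset.mem_univ, true_and] at hx ⊢
      obtain ⟨i, rfl⟩ := hx
      obtain ⟨j, hj, _⟩ := himt i
      exact ⟨j, hj⟩
  have hqp : q = p := by
    have h1 : (Finset.image s Finset.univ).card = q := by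
      rw [Finset.card_image_of_injective _ hsinj, Finset.card_univ, Fintype.card_fin]
    have h2 : (Finset.image t Finset.univ).card = p := by
      rw [Finset.card_image_of_injective _ htinj, Finset.card_univ, Fintype.card_fin]
    rw [← h1, ← h2, himeq]
  refine ⟨hqp, fun i => ?_⟩
  have hEcard : (Finset.image t Finset.univ).card = p := by
    rw [Finset.card_image_of_injective _ htinj, Finset.card_univ, Fintype.card_fin]
  have htE : t = (Finset.image t Finset.univ).orderEmbOfFin hEcard :=
    Finset.orderEmbOfFin_unique hEcard
      (fun x => Finset.mem_image_of_mem t (Finset.mem_univ x)) ht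
  have hsmono : StrictMono (fun i : Fin p => s (Fin.cast hqp.symm i)) := by
    intro i i' hii'
    apply hs
    rw [Fin.lt_def] at hii' ⊢
    exact hii'
  have hsE : (fun i : Fin p => s (Fin.cast hqp.symm i))
      = (Finset.image t Finset.univ).orderEmbOfFin hEcard :=
    Finset.orderEmbOfFin_unique hEcard
      (fun x => himeq ▸ Finset.mem_image_of_mem s (Finset.mem_univ _)) hsmono
  have hst : s i = t (Fin.cast hqp i) := by
    have h1 := congrFun hsE (Fin.cast hqp i)
    have h2 := congrFun htE (Fin.cast hqp i)
    have : Fin.cast hqp.symm (Fin.cast hqp i) = i := by ext; simp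
    rw [this] at h1
    rw [h2, ← h1]
  refine ⟨hst, ?_⟩
  obtain ⟨j, hj1, hj2⟩ := himt (Fin.cast hqp i)
  have hji : j = i := hsinj (by rw [hj1, ← hst])
  rw [hji] at hj2
  exact hj2
end

section
/- Let $\{u_j\}_{j=0}^{2l-1}$ be a Chebyshev set on $[a,b]$ and suppose points $a < t_1 < \cdots < t_l < b$ and weights $\lambda_1,\ldots,\lambda_l > 0$ satisfy the exactness conditions $\sum_{i=1}^l \lambda_i u_j(t_i) = \int_a^b u_j(t)\,w(t)\,dt$ for $j=0,\ldots,2l-1$, where $w > 0$ is a continuous weight. Then the points and weights are unique: any other set of $l$ interior points and positive weights satisfying the same conditions coincides with it. -/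
/-!
Both rules, and their difference, are exact on the span of the Chebyshev set. The two rules
together use at most `2l` distinct nodes, so by unisolvence some `f` in the span interpolates,
at every node, the difference of the masses the two rules put there. Applying the difference
rule to `f` gives the sum of the squares of these mass differences, which must vanish; the
rules therefore put the same mass at every point, and positivity of the weights turns this into
equality of nodes and weights.
-/

open Finset

def IsChebyshevOn {α : Type*} [LinearOrder α] {n : ℕ} (u : Fin n → α → ℝ) (S : Set α) : Prop :=
  ∀ c : Fin n → ℝ, c ≠ 0 → ∀ t : Fin n → α, StrictMono t → (∀ i, t i ∈ S) →
    ¬ ∀ i, ∑ j, c j * u j (t i) = 0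

def nodeMass {ι α : Type*} [Fintype ι] [DecidableEq α] (t : ι → α) (lam : ι → ℝ) (p : α) : ℝ :=
  ∑ i with t i = p, lam i

section NodeMass

variable {ι α : Type*} [Fintype ι] [DecidableEq α] {t : ι → α} (lam : ι → ℝ)

theorem sum_mul_eq_sum_nodeMass_mul {T : Finset α} (hT : ∀ i, t i ∈ T) (f : α → ℝ) :
    ∑ i, lam i * f (t i) = ∑ p ∈ T, nodeMass t lam p * f p := by
  rw [← sum_fiberwise_of_maps_to (fun i _ => hT i)]
  refine sum_congr rfl fun p _ => ?_
  rw [nodeMass, sum_mul]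
  exact sum_congr rfl fun i hi => by rw [(mem_filter.1 hi).2]

theorem nodeMass_apply_of_injective (ht : Function.Injective t) (k : ι) :
    nodeMass t lam (t k) = lam k := by
  have hfiber : ({i | t i = t k} : Finset ι) = {k} := by
    ext i
    simp [ht.eq_iff]
  rw [nodeMass, hfiber, sum_singleton]

theorem nodeMass_eq_zero {p : α} (hp : ∀ i, t i ≠ p) : nodeMass t lam p = 0 :=
  sum_eq_zero fun i hi => absurd (mem_filter.1 hi).2 (hp i)

theorem range_subset_range_of_nodeMass_eq {κ : Type*} [Fintype κ] {s : κ → α} {mu : κ → ℝ}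
    (ht : Function.Injective t) (hlam : ∀ i, lam i ≠ 0) (h : nodeMass t lam = nodeMass s mu) :
    Set.range t ⊆ Set.range s := by
  rintro _ ⟨k, rfl⟩
  by_contra hk
  have hzero : nodeMass s mu (t k) = 0 := nodeMass_eq_zero mu fun i hi => hk ⟨i, hi⟩
  rw [← h, nodeMass_apply_of_injective lam ht] at hzero
  exact hlam k hzero

end NodeMass

theorem sum_mul_sum_mul_comm {ι α : Type*} [Fintype ι] {n : ℕ} (lam : ι → ℝ) (t : ι → α)
    (c : Fin n → ℝ) (u : Fin n → α → ℝ) :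
    ∑ i, lam i * ∑ j, c j * u j (t i) = ∑ j, c j * ∑ i, lam i * u j (t i) := by
  simp only [mul_sum]
  rw [sum_comm]
  exact sum_congr rfl fun j _ => sum_congr rfl fun i _ => mul_left_comm _ _ _

theorem Set.Infinite.exists_superset_finset_card_eq {α : Type*} {S : Set α} (hS : S.Infinite)
    {T : Finset α} (hTS : ↑T ⊆ S) {n : ℕ} (hn : #T ≤ n) :
    ∃ T' : Finset α, T ⊆ T' ∧ ↑T' ⊆ S ∧ #T' = n := by
  classical
  obtain ⟨R, hRS, hR⟩ := (hS.sdiff T.finite_toSet).exists_subset_card_eq (n - #T)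
  have hdisj : Disjoint T R := Finset.disjoint_left.2 fun p hpT hpR => (hRS hpR).2 hpT
  refine ⟨T ∪ R, Finset.subset_union_left, ?_, ?_⟩
  · rw [coe_union]
    exact Set.union_subset hTS fun p hp => (hRS hp).1
  · rw [card_union_of_disjoint hdisj, hR]
    omega

namespace IsChebyshevOn

variable {α : Type*} [LinearOrder α] {n : ℕ} {u : Fin n → α → ℝ} {S : Set α}

theorem exists_interpolant_of_card_eq (hu : IsChebyshevOn u S) {T : Finset α} (hTS : ↑T ⊆ S)
    (hT : #T = n) (g : α → ℝ) : ∃ c : Fin n → ℝ, ∀ p ∈ T, ∑ j, c j * u j p = g p := by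
  set x := T.orderEmbOfFin hT
  let M : Matrix (Fin n) (Fin n) ℝ := Matrix.of fun j i => u j (x i)
  have hinj : Function.Injective M.vecMul := by
    intro c d hcd
    by_contra hne
    refine hu (c - d) (sub_ne_zero.2 hne) x x.strictMono
      (fun i => hTS (T.orderEmbOfFin_mem hT i)) fun i => ?_
    have hzero : Matrix.vecMul (c - d) M = 0 := by
      rw [Matrix.sub_vecMul]
      exact sub_eq_zero.2 hcd
    simpa [Matrix.vecMul, dotProduct, M] using congrFun hzero i
  obtain ⟨c, hc⟩ := Matrix.vecMul_surjective_iff_isUnit.2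
    (Matrix.vecMul_injective_iff_isUnit.1 hinj) (g ∘ x)
  refine ⟨c, fun p hp => ?_⟩
  obtain ⟨i, rfl⟩ : p ∈ Set.range x := by rw [T.range_orderEmbOfFin hT]; exact hp
  simpa [Matrix.vecMul, dotProduct, M] using congrFun hc i

theorem exists_interpolant (hu : IsChebyshevOn u S) (hS : S.Infinite) {T : Finset α}
    (hTS : ↑T ⊆ S) (hT : #T ≤ n) (g : α → ℝ) :
    ∃ c : Fin n → ℝ, ∀ p ∈ T, ∑ j, c j * u j p = g p := by
  obtain ⟨T', hTT', hT'S, hT'⟩ := hS.exists_superset_finset_card_eq hTS hT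
  obtain ⟨c, hc⟩ := hu.exists_interpolant_of_card_eq hT'S hT' g
  exact ⟨c, fun p hp => hc p (hTT' hp)⟩

theorem nodeMass_eq [DecidableEq α] (hu : IsChebyshevOn u S) (hS : S.Infinite)
    {ι κ : Type*} [Fintype ι] [Fintype κ] (hcard : Fintype.card ι + Fintype.card κ ≤ n)
    {t : ι → α} {s : κ → α} (ht : ∀ i, t i ∈ S) (hs : ∀ i, s i ∈ S) {lam : ι → ℝ} {mu : κ → ℝ}
    (hexact : ∀ j, ∑ i, lam i * u j (t i) = ∑ i, mu i * u j (s i)) :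
    nodeMass t lam = nodeMass s mu := by
  set T := univ.image t ∪ univ.image s
  have htT : ∀ i, t i ∈ T := fun i => mem_union_left _ (mem_image_of_mem t (mem_univ i))
  have hsT : ∀ i, s i ∈ T := fun i => mem_union_right _ (mem_image_of_mem s (mem_univ i))
  have hTS : ↑T ⊆ S := by
    intro p hp
    rcases mem_union.1 hp with hp | hp <;> obtain ⟨i, -, rfl⟩ := mem_image.1 hp
    exacts [ht i, hs i]
  have hT : #T ≤ n :=
    (card_union_le _ _).trans ((add_le_add card_image_le card_image_le).trans hcard)
  set g := fun p => nodeMass t lam p - nodeMass s mu p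
  obtain ⟨c, hc⟩ := hu.exists_interpolant hS hTS hT g
  set f := fun p => ∑ j, c j * u j p
  have hsq : ∑ p ∈ T, g p * g p = 0 := calc
    ∑ p ∈ T, g p * g p = ∑ p ∈ T, g p * f p :=
      sum_congr rfl fun p hp => by rw [← hc p hp]
    _ = ∑ i, lam i * f (t i) - ∑ i, mu i * f (s i) := by
      rw [sum_mul_eq_sum_nodeMass_mul lam htT, sum_mul_eq_sum_nodeMass_mul mu hsT,
        ← sum_sub_distrib]
      exact sum_congr rfl fun p _ => sub_mul _ _ _
    _ = 0 := by
      rw [sub_eq_zero, sum_mul_sum_mul_comm, sum_mul_sum_mul_comm]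
      exact sum_congr rfl fun j _ => by rw [hexact j]
  funext p
  by_cases hp : p ∈ T
  · exact sub_eq_zero.1 ((sum_mul_self_eq_zero_iff T g).1 hsq p hp)
  · rw [nodeMass_eq_zero lam fun i (hi : t i = p) => hp (hi ▸ htT i),
      nodeMass_eq_zero mu fun i (hi : s i = p) => hp (hi ▸ hsT i)]

end IsChebyshevOn

theorem generalized_gauss_unique_general
    (l : ℕ) (a b : ℝ) (hab : a < b) (u : Fin (2 * l) → ℝ → ℝ)
    (hcheb : ∀ c : Fin (2 * l) → ℝ, c ≠ 0 →
      ∀ t : Fin (2 * l) → ℝ, StrictMono t → (∀ i, t i ∈ Set.Icc a b) →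
        ¬ (∀ i, ∑ j, c j * u j (t i) = 0))
    (w : ℝ → ℝ)
    (t : Fin l → ℝ) (lam : Fin l → ℝ)
    (ht : StrictMono t) (htab : ∀ i, t i ∈ Set.Ioo a b) (hlam : ∀ i, 0 < lam i)
    (hexact : ∀ j, ∑ i, lam i * u j (t i) = ∫ x in Set.Icc a b, u j x * w x)
    (s : Fin l → ℝ) (mu : Fin l → ℝ)
    (hs : StrictMono s) (hsab : ∀ i, s i ∈ Set.Ioo a b) (hmu : ∀ i, 0 < mu i)
    (hexact' : ∀ j, ∑ i, mu i * u j (s i) = ∫ x in Set.Icc a b, u j x * w x) :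
    t = s ∧ lam = mu := by
  classical
  have hmass : nodeMass t lam = nodeMass s mu :=
    IsChebyshevOn.nodeMass_eq (S := Set.Icc a b) hcheb (Set.Icc_infinite hab)
      (by simp [two_mul]) (fun i => Set.Ioo_subset_Icc_self (htab i))
      (fun i => Set.Ioo_subset_Icc_self (hsab i)) fun j => (hexact j).trans (hexact' j).symm
  obtain rfl : t = s := (ht.range_inj hs).1 <| subset_antisymm
    (range_subset_range_of_nodeMass_eq lam ht.injective (fun i => (hlam i).ne') hmass)
    (range_subset_range_of_nodeMass_eq mu hs.injective (fun i => (hmu i).ne') hmass.symm)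
  refine ⟨rfl, funext fun k => ?_⟩
  rw [← nodeMass_apply_of_injective lam ht.injective, hmass,
    nodeMass_apply_of_injective mu ht.injective]

/-- Uniqueness of the generalized Gaussian quadrature rule: for a Chebyshev set
of size `2l` and a positive continuous weight, any two `l`-point quadrature
rules with interior points and positive weights that are exact on the set
coincide. -/
theorem generalized_gauss_unique
    (l : ℕ) (a b : ℝ) (hab : a < b) (u : Fin (2 * l) → ℝ → ℝ)
    (hcont : ∀ j, ContinuousOn (u j) (Set.Icc a b))
    (hcheb : ∀ c : Fin (2 * l) → ℝ, c ≠ 0 →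
      ∀ t : Fin (2 * l) → ℝ, StrictMono t → (∀ i, t i ∈ Set.Icc a b) →
        ¬ (∀ i, ∑ j, c j * u j (t i) = 0))
    (w : ℝ → ℝ) (hw : ContinuousOn w (Set.Icc a b))
    (hwpos : ∀ x ∈ Set.Icc a b, 0 < w x)
    (t : Fin l → ℝ) (lam : Fin l → ℝ)
    (ht : StrictMono t) (htab : ∀ i, t i ∈ Set.Ioo a b) (hlam : ∀ i, 0 < lam i)
    (hexact : ∀ j, ∑ i, lam i * u j (t i) = ∫ x in Set.Icc a b, u j x * w x)
    (s : Fin l → ℝ) (mu : Fin l → ℝ)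
    (hs : StrictMono s) (hsab : ∀ i, s i ∈ Set.Ioo a b) (hmu : ∀ i, 0 < mu i)
    (hexact' : ∀ j, ∑ i, mu i * u j (s i) = ∫ x in Set.Icc a b, u j x * w x) :
    t = s ∧ lam = mu :=
  generalized_gauss_unique_general l a b hab u hcheb w t lam ht htab hlam hexact s mu hs hsab hmu
    hexact'
end

section
/- Let $\{u_0, u_1\}$ be a Chebyshev set on $[a,b]$ with $u_0 > 0$ on $[a,b]$, and let $w > 0$ be continuous. Then there exists a one-point quadrature rule exact for $u_0$ and $u_1$: there exist $\xi \in [a,b]$ and $\lambda > 0$ with $\lambda u_0(\xi) = \int_a^b u_0 w\,dt$ and $\lambda u_1(\xi) = \int_a^b u_1 w\,dt$. -/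
open MeasureTheory

lemma pos_integral_of_pos (a b : ℝ) (hab : a < b) (f : ℝ → ℝ)
    (hf : ContinuousOn f (Set.Icc a b)) (hfpos : ∀ x ∈ Set.Icc a b, 0 < f x) :
    0 < ∫ x in Set.Icc a b, f x := by
  rw [MeasureTheory.integral_Icc_eq_integral_Ioc, ← intervalIntegral.integral_of_le hab.le]
  apply intervalIntegral.intervalIntegral_pos_of_pos_on
  · exact (hf.mono (by rw [Set.uIcc_of_le hab.le])).intervalIntegrable
  · intro x hx; exact hfpos x (Set.mem_Icc_of_Ioo hx)
  · exact hab

/-- Existence of a one-point generalized Gaussian quadrature rule for a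
Chebyshev set `{u₀, u₁}` with `u₀ > 0` on `[a,b]`. -/
theorem one_point_rule_exists
    (a b : ℝ) (hab : a < b) (u0 u1 : ℝ → ℝ)
    (h0 : ContinuousOn u0 (Set.Icc a b)) (h1 : ContinuousOn u1 (Set.Icc a b))
    (hu0pos : ∀ x ∈ Set.Icc a b, 0 < u0 x)
    (hcheb : ∀ c0 c1 : ℝ, ¬ (c0 = 0 ∧ c1 = 0) →
      ∀ x ∈ Set.Icc a b, ∀ y ∈ Set.Icc a b, x < y →
        ¬ (c0 * u0 x + c1 * u1 x = 0 ∧ c0 * u0 y + c1 * u1 y = 0))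
    (w : ℝ → ℝ) (hw : ContinuousOn w (Set.Icc a b))
    (hwpos : ∀ x ∈ Set.Icc a b, 0 < w x) :
    ∃ ξ ∈ Set.Icc a b, ∃ lam : ℝ, 0 < lam ∧
      lam * u0 ξ = (∫ x in Set.Icc a b, u0 x * w x) ∧
      lam * u1 ξ = (∫ x in Set.Icc a b, u1 x * w x) := by
  set I0 := ∫ x in Set.Icc a b, u0 x * w x with hI0
  set I1 := ∫ x in Set.Icc a b, u1 x * w x with hI1
  have hI0pos : 0 < I0 := pos_integral_of_pos a b hab _ (h0.mul hw)
    (fun x hx => mul_pos (hu0pos x hx) (hwpos x hx))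
  set h : ℝ → ℝ := fun x => I0 * u1 x - I1 * u0 x with hh
  have hhc : ContinuousOn h (Set.Icc a b) :=
    (continuousOn_const.mul h1).sub (continuousOn_const.mul h0)
  have hint0 : IntegrableOn (fun x => u0 x * w x) (Set.Icc a b) :=
    (h0.mul hw).integrableOn_compact isCompact_Icc
  have hint1 : IntegrableOn (fun x => u1 x * w x) (Set.Icc a b) :=
    (h1.mul hw).integrableOn_compact isCompact_Icc
  have hzero : (∫ x in Set.Icc a b, h x * w x) = 0 := by
    have : ∀ x, h x * w x = I0 * (u1 x * w x) - I1 * (u0 x * w x) := by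
      intro x; simp [hh]; ring
    simp only [this]
    rw [MeasureTheory.integral_sub (hint1.const_mul I0) (hint0.const_mul I1),
      MeasureTheory.integral_const_mul, MeasureTheory.integral_const_mul, ← hI0, ← hI1]
    ring
  -- h must vanish somewhere
  have hex : ∃ ξ ∈ Set.Icc a b, h ξ = 0 := by
    by_contra hcon
    push_neg at hcon
    have ha : a ∈ Set.Icc a b := Set.left_mem_Icc.mpr hab.le
    rcases lt_or_gt_of_ne (hcon a ha) with hneg | hpos
    · -- h a < 0 : show h < 0 everywhere
      have hall : ∀ x ∈ Set.Icc a b, h x < 0 := by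
        intro x hx
        rcases lt_or_gt_of_ne (hcon x hx) with q | q
        · exact q
        · exfalso
          have := intermediate_value_Icc hx.1 (hhc.mono (Set.Icc_subset_Icc_right hx.2))
          have h0mem : (0:ℝ) ∈ Set.Icc (h a) (h x) := ⟨hneg.le, q.le⟩
          obtain ⟨c, hc, hc0⟩ := this h0mem
          exact hcon c (Set.Icc_subset_Icc_right hx.2 hc) hc0
      have : 0 < ∫ x in Set.Icc a b, (-(h x)) * w x :=
        pos_integral_of_pos a b hab _ (hhc.neg.mul hw)
          (fun x hx => mul_pos (neg_pos.mpr (hall x hx)) (hwpos x hx))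
      rw [show (fun x => (-(h x)) * w x) = fun x => -(h x * w x) by funext x; ring,
        MeasureTheory.integral_neg, hzero] at this
      simp at this
    · have hall : ∀ x ∈ Set.Icc a b, 0 < h x := by
        intro x hx
        rcases lt_or_gt_of_ne (hcon x hx) with q | q
        · exfalso
          have := intermediate_value_Icc' hx.1 (hhc.mono (Set.Icc_subset_Icc_right hx.2))
          have h0mem : (0:ℝ) ∈ Set.Icc (h x) (h a) := ⟨q.le, hpos.le⟩
          obtain ⟨c, hc, hc0⟩ := this h0mem
          exact hcon c (Set.Icc_subset_Icc_right hx.2 hc) hc0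
        · exact q
      have : 0 < ∫ x in Set.Icc a b, h x * w x :=
        pos_integral_of_pos a b hab _ (hhc.mul hw)
          (fun x hx => mul_pos (hall x hx) (hwpos x hx))
      rw [hzero] at this; exact lt_irrefl 0 this
  obtain ⟨ξ, hξ, hξ0⟩ := hex
  refine ⟨ξ, hξ, I0 / u0 ξ, div_pos hI0pos (hu0pos ξ hξ), ?_, ?_⟩
  · exact div_mul_cancel₀ I0 (hu0pos ξ hξ).ne'
  · have hu0ne : u0 ξ ≠ 0 := (hu0pos ξ hξ).ne'
    have : I0 * u1 ξ = I1 * u0 ξ := by linarith [sub_eq_zero.mp (by simpa [hh] using hξ0)]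
    field_simp
    linarith [this]
end

section
/- Let $\{u_j\}_{j=0}^{n}$ be a Chebyshev set on $[a,b]$ with $n = 2l-1$, and let $\mathbf{c}$ be an interior point of the moment cone $\mathcal{M}_{n+1}$. If $\underline{\sigma}$ is the lower principal representation with interior roots $a < t_1 < \cdots < t_l < b$ and $\overline{\sigma}$ is the upper principal representation with roots $a = s_1 < s_2 < \cdots < s_{l+1} = b$, then the roots strictly interlace: $s_i < t_i < s_{i+1}$ for $i = 1,\ldots,l$. -/
/-!
The difference `ν = ∑ λᵢ δ_{tᵢ} - ∑ μⱼ δ_{sⱼ}` of the two representations annihilates every `uⱼ`.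
A nonzero signed measure annihilating a Chebyshev system of `n` functions has more than `n`
atoms, and when it has exactly `n + 1` its weights alternate in sign along the sorted atoms:
the left kernel of the `(n + 1) × n` collocation matrix is spanned by the alternating maximal
minors, and these minors all have the same sign since the collocation determinant is continuous
and never vanishes on the connected set of increasing `n`-tuples. Here `ν` has at most `2l + 1`
atoms and the nonzero weight `-μ₀` at `a`, so the `tᵢ` and `sⱼ` are `2l + 1` distinct points,
and the alternation, negative at `a`, forces `s₀ < t₀ < s₁ < ⋯ < t_{l-1} < s_l`.
-/

open Finset Matrix

def IsChebyshevSystem {n : ℕ} (u : Fin n → ℝ → ℝ) (I : Set ℝ) : Prop :=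
  ∀ c : Fin n → ℝ, c ≠ 0 → ∀ x : Fin n → ℝ, StrictMono x → (∀ i, x i ∈ I) →
    ¬ ∀ i, ∑ j, c j * u j (x i) = 0

def collocationMatrix {m n : ℕ} (u : Fin n → ℝ → ℝ) (x : Fin m → ℝ) :
    Matrix (Fin m) (Fin n) ℝ :=
  Matrix.of fun i j => u j (x i)

noncomputable def alternatingMinors {n : ℕ} (u : Fin n → ℝ → ℝ) (x : Fin (n + 1) → ℝ) :
    Fin (n + 1) → ℝ :=
  fun i => (-1) ^ (i : ℕ) * (collocationMatrix u (x ∘ i.succAbove)).det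

theorem alternatingMinors_vecMul_collocationMatrix_eq_zero {n : ℕ} (u : Fin n → ℝ → ℝ)
    (x : Fin (n + 1) → ℝ) : alternatingMinors u x ᵥ* collocationMatrix u x = 0 := by
  ext j
  -- Laplace expansion along column `0` of a matrix whose columns `0` and `j + 1` are both `u j`
  let P : Matrix (Fin (n + 1)) (Fin (n + 1)) ℝ :=
    Matrix.of fun i => Fin.cons (u j (x i)) fun m => u m (x i)
  have hP : P.det = 0 := det_zero_of_column_eq (Fin.succ_ne_zero j).symm fun i => by simp [P]
  rw [det_succ_column_zero] at hP
  rw [Pi.zero_apply, ← hP]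
  simp only [vecMul, dotProduct, alternatingMinors, collocationMatrix]
  refine Finset.sum_congr rfl fun i _ => ?_
  simp [P, submatrix]
  ring

theorem convex_setOf_strictMono_forall_mem {n : ℕ} {I : Set ℝ} (hI : Convex ℝ I) :
    Convex ℝ {x : Fin n → ℝ | StrictMono x ∧ ∀ i, x i ∈ I} := by
  rintro p ⟨hp, hpI⟩ q ⟨hq, hqI⟩ α β hα hβ hαβ
  refine ⟨fun i j hij => ?_, fun i => hI (hpI i) (hqI i) hα hβ hαβ⟩
  simp only [Pi.add_apply, Pi.smul_apply, smul_eq_mul]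
  rcases hα.eq_or_lt with rfl | hα
  · obtain rfl : β = 1 := by simpa using hαβ
    simpa using hq hij
  · exact add_lt_add_of_lt_of_le (mul_lt_mul_of_pos_left (hp hij) hα)
      (mul_le_mul_of_nonneg_left (hq hij).le hβ)

theorem linearCombination_swap_eq_vecMul {n m : ℕ} (u : Fin n → ℝ → ℝ) {ν : ℝ →₀ ℝ}
    {G : Finset ℝ} (hG : #G = m) (hνG : ν.support ⊆ G) :
    Finsupp.linearCombination ℝ (Function.swap u) ν =
      (ν ∘ G.orderEmbOfFin hG) ᵥ* collocationMatrix u (G.orderEmbOfFin hG) := by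
  rw [Finsupp.linearCombination_apply_of_mem_supported ℝ (s := G)
      ((Finsupp.mem_supported ℝ ν).2 (by exact_mod_cast hνG))]
  conv_lhs => rw [← G.map_orderEmbOfFin_univ hG, sum_map]
  ext j
  simp [vecMul, dotProduct, collocationMatrix]

namespace IsChebyshevSystem

variable {n : ℕ} {u : Fin n → ℝ → ℝ} {I : Set ℝ}

theorem det_collocationMatrix_ne_zero (hu : IsChebyshevSystem u I) {x : Fin n → ℝ}
    (hx : StrictMono x) (hxI : ∀ i, x i ∈ I) : (collocationMatrix u x).det ≠ 0 := fun h => by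
  obtain ⟨c, hc, hMc⟩ := exists_mulVec_eq_zero_iff.2 h
  exact hu c hc x hx hxI fun i => by
    simpa [mulVec, dotProduct, collocationMatrix, mul_comm] using congrFun hMc i

theorem eq_zero_of_vecMul_collocationMatrix_eq_zero (hu : IsChebyshevSystem u I)
    {x : Fin n → ℝ} (hx : StrictMono x) (hxI : ∀ i, x i ∈ I) {ε : Fin n → ℝ}
    (hε : ε ᵥ* collocationMatrix u x = 0) : ε = 0 := by
  by_contra h
  exact hu.det_collocationMatrix_ne_zero hx hxI (exists_vecMul_eq_zero_iff.1 ⟨ε, h, hε⟩)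

theorem det_collocationMatrix_mul_det_pos (hu : IsChebyshevSystem u I) (hI : Convex ℝ I)
    (hcont : ∀ j, ContinuousOn (u j) I) {x y : Fin n → ℝ} (hx : StrictMono x)
    (hxI : ∀ i, x i ∈ I) (hy : StrictMono y) (hyI : ∀ i, y i ∈ I) :
    0 < (collocationMatrix u x).det * (collocationMatrix u y).det := by
  set S := {z : Fin n → ℝ | StrictMono z ∧ ∀ i, z i ∈ I}
  have hdet : ContinuousOn (fun z => (collocationMatrix u z).det) S :=
    continuous_id.matrix_det.comp_continuousOn <| continuousOn_pi.2 fun i =>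
      continuousOn_pi.2 fun j => (hcont j).comp (continuous_apply i).continuousOn fun z hz => hz.2 i
  have hconn := ((convex_setOf_strictMono_forall_mem hI).isPreconnected.image _ hdet).ordConnected
  by_contra! hle
  obtain ⟨z, ⟨hz, hzI⟩, hz0⟩ := hconn.uIcc_subset ⟨x, ⟨hx, hxI⟩, rfl⟩ ⟨y, ⟨hy, hyI⟩, rfl⟩
    (show (0 : ℝ) ∈ Set.uIcc _ _ by
      rcases mul_nonpos_iff.1 hle with h | h
      · exact Set.mem_uIcc.2 (Or.inr h.symm)
      · exact Set.mem_uIcc.2 (Or.inl h))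
  exact hu.det_collocationMatrix_ne_zero hz hzI hz0

theorem exists_eq_smul_alternatingMinors (hu : IsChebyshevSystem u I) {x : Fin (n + 1) → ℝ}
    (hx : StrictMono x) (hxI : ∀ i, x i ∈ I) {ε : Fin (n + 1) → ℝ}
    (hε : ε ᵥ* collocationMatrix u x = 0) : ∃ c : ℝ, ε = c • alternatingMinors u x := by
  set v := alternatingMinors u x
  have hv0 : v 0 ≠ 0 := by
    simpa [v, alternatingMinors] using
      hu.det_collocationMatrix_ne_zero (hx.comp (Fin.strictMono_succAbove 0)) fun i => hxI _
  refine ⟨ε 0 / v 0, ?_⟩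
  set δ := ε - (ε 0 / v 0) • v
  have hδ : δ ᵥ* collocationMatrix u x = 0 := by
    simp [δ, sub_vecMul, smul_vecMul, hε, v, alternatingMinors_vecMul_collocationMatrix_eq_zero]
  have hδ0 : δ 0 = 0 := by simp [δ, hv0]
  -- with `δ 0 = 0`, the relation only involves the `n` points `x 1 < ⋯ < x n`
  have hδsucc : δ ∘ Fin.succ = 0 := by
    refine hu.eq_zero_of_vecMul_collocationMatrix_eq_zero (hx.comp Fin.strictMono_succ)
      (fun i => hxI _) ?_
    ext j
    simpa [vecMul, dotProduct, Fin.sum_univ_succ, hδ0, collocationMatrix] using congrFun hδ j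
  rw [← sub_eq_zero]
  ext i
  refine Fin.cases hδ0 (fun i => ?_) i
  exact congrFun hδsucc i

theorem neg_one_pow_mul_pos (hu : IsChebyshevSystem u I) (hI : Convex ℝ I)
    (hcont : ∀ j, ContinuousOn (u j) I) {x : Fin (n + 1) → ℝ} (hx : StrictMono x)
    (hxI : ∀ i, x i ∈ I) {ε : Fin (n + 1) → ℝ} (hε : ε ᵥ* collocationMatrix u x = 0)
    (hε0 : ε ≠ 0) (k : Fin (n + 1)) : 0 < (-1) ^ (k : ℕ) * ε 0 * ε k := by
  obtain ⟨c, rfl⟩ := hu.exists_eq_smul_alternatingMinors hx hxI hε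
  have hc : c ≠ 0 := by rintro rfl; simp at hε0
  have hD := hu.det_collocationMatrix_mul_det_pos hI hcont
    (hx.comp (Fin.strictMono_succAbove 0)) (fun i => hxI _)
    (hx.comp (Fin.strictMono_succAbove k)) (fun i => hxI _)
  set D₀ := (collocationMatrix u (x ∘ Fin.succAbove 0)).det
  set Dₖ := (collocationMatrix u (x ∘ k.succAbove)).det
  have hsq : ((-1 : ℝ) ^ (k : ℕ)) ^ 2 = 1 := by rw [← pow_mul, mul_comm, pow_mul]; simp
  calc 0 < c ^ 2 * (D₀ * Dₖ) := by positivity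
    _ = _ := by
      simp only [Pi.smul_apply, smul_eq_mul, alternatingMinors, Fin.val_zero, pow_zero]
      linear_combination (-c ^ 2 * D₀ * Dₖ) * hsq

theorem lt_card_support (hu : IsChebyshevSystem u I) (hI : I.Infinite) {ν : ℝ →₀ ℝ}
    (hνI : ↑ν.support ⊆ I) (hν : Finsupp.linearCombination ℝ (Function.swap u) ν = 0)
    (hν0 : ν ≠ 0) : n < #ν.support := by
  by_contra! hcard
  refine hν0 ?_
  obtain ⟨G, hνG, hGI, hG⟩ := Set.exists_superset_subset_encard_eq (k := n) hνI
    (by simpa using hcard) (by simp [hI.encard_eq])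
  lift G to Finset ℝ using Set.finite_of_encard_eq_coe hG
  replace hG : #G = n := by simpa using hG
  set X := G.orderEmbOfFin hG
  have hνX : ν ∘ X = 0 :=
    hu.eq_zero_of_vecMul_collocationMatrix_eq_zero X.strictMono
      (fun k => hGI (G.orderEmbOfFin_mem hG k))
      (by rw [← linearCombination_swap_eq_vecMul u hG (by exact_mod_cast hνG), hν])
  ext z
  by_contra hz
  obtain ⟨k, rfl⟩ : z ∈ Set.range X := by
    rw [range_orderEmbOfFin]; exact hνG (Finsupp.mem_support_iff.2 hz)
  exact hz (congrFun hνX k)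

theorem neg_one_pow_mul_pos_of_card_support_eq (hu : IsChebyshevSystem u I) (hI : Convex ℝ I)
    (hcont : ∀ j, ContinuousOn (u j) I) {ν : ℝ →₀ ℝ} (hνI : ↑ν.support ⊆ I)
    (hcard : #ν.support = n + 1) (hν : Finsupp.linearCombination ℝ (Function.swap u) ν = 0)
    (k : Fin (n + 1)) :
    0 < (-1) ^ (k : ℕ) * ν (ν.support.orderEmbOfFin hcard 0) *
      ν (ν.support.orderEmbOfFin hcard k) := by
  set X := ν.support.orderEmbOfFin hcard
  have hXν : ∀ k, ν (X k) ≠ 0 := fun k => Finsupp.mem_support_iff.1 (orderEmbOfFin_mem _ hcard k)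
  refine hu.neg_one_pow_mul_pos hI hcont (ε := ν ∘ X) X.strictMono
    (fun k => hνI (orderEmbOfFin_mem _ hcard k)) ?_ (fun h => hXν 0 (congrFun h 0)) k
  rw [← linearCombination_swap_eq_vecMul u hcard subset_rfl, hν]

end IsChebyshevSystem

section PointMasses

variable {ι : Type*} [Fintype ι]

noncomputable def pointMasses (x w : ι → ℝ) : ℝ →₀ ℝ := ∑ i, Finsupp.single (x i) (w i)

theorem pointMasses_apply_of_forall_eq_imp {x : ι → ℝ} (w : ι → ℝ) {i : ι}
    (hi : ∀ k, x k = x i → k = i) : pointMasses x w (x i) = w i := by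
  classical
  rw [pointMasses, Finsupp.finsetSum_apply, sum_eq_single i (fun k _ hk => ?_) (by simp)]
  · simp
  · exact Finsupp.single_eq_of_ne (fun h => hk (hi k h.symm))

theorem pointMasses_apply_of_injective {x : ι → ℝ} (hx : Function.Injective x) (w : ι → ℝ)
    (i : ι) : pointMasses x w (x i) = w i :=
  pointMasses_apply_of_forall_eq_imp w fun _ hk => hx hk

theorem support_pointMasses_subset [DecidableEq ℝ] (x w : ι → ℝ) :
    (pointMasses x w).support ⊆ univ.image x := by
  refine Finsupp.support_finsetSum.trans (biUnion_subset.2 fun i _ => ?_)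
  exact Finsupp.support_single_subset.trans (by simp)

theorem support_pointMasses_subset_range (x w : ι → ℝ) :
    ↑(pointMasses x w).support ⊆ Set.range x := by
  classical
  exact (coe_subset.2 (support_pointMasses_subset x w)).trans (by simp)

theorem card_support_pointMasses_le (x w : ι → ℝ) :
    #(pointMasses x w).support ≤ Fintype.card ι := by
  classical
  exact (card_le_card (support_pointMasses_subset x w)).trans card_image_le

theorem injective_of_card_le_card_support_pointMasses {x w : ι → ℝ}
    (h : Fintype.card ι ≤ #(pointMasses x w).support) : Function.Injective x := by
  classical
  rw [← Set.injOn_univ, ← coe_univ, ← card_image_iff]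
  exact le_antisymm card_image_le ((h.trans (card_le_card (support_pointMasses_subset x w))))

theorem linearCombination_pointMasses {M : Type*} [AddCommMonoid M] [Module ℝ M] (v : ℝ → M)
    (x w : ι → ℝ) : Finsupp.linearCombination ℝ v (pointMasses x w) = ∑ i, w i • v (x i) := by
  simp [pointMasses]

end PointMasses

theorem Finset.orderEmbOfFin_zero_eq {α : Type*} [LinearOrder α] {s : Finset α} {k : ℕ}
    (h : #s = k + 1) {a : α} (ha : a ∈ s) (hmin : ∀ b ∈ s, a ≤ b) : s.orderEmbOfFin h 0 = a := by
  obtain ⟨i, rfl⟩ : a ∈ Set.range (s.orderEmbOfFin h) := by rwa [range_orderEmbOfFin]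
  exact le_antisymm ((s.orderEmbOfFin h).monotone (Fin.zero_le i))
    (hmin _ (orderEmbOfFin_mem s h 0))

theorem interlace_of_neg_one_pow_mul_pos {l : ℕ} {f : ℝ → ℝ} {X : Fin (2 * l + 1) → ℝ}
    {s : Fin (l + 1) → ℝ} {t : Fin l → ℝ} (hX : StrictMono X) (hs : StrictMono s)
    (ht : StrictMono t) (hXst : Set.range X ⊆ Set.range t ∪ Set.range s)
    (hfX : ∀ k : Fin (2 * l + 1), 0 < (-1) ^ (k : ℕ) * f (X 0) * f (X k)) (hX0 : f (X 0) < 0)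
    (hfs : ∀ j, f (s j) < 0) (hft : ∀ i, 0 < f (t i)) :
    ∀ i : Fin l, s i.castSucc < t i ∧ t i < s i.succ := by
  classical
  let e : Fin (l + 1) → Fin (2 * l + 1) := fun j => ⟨2 * j, by omega⟩
  let o : Fin l → Fin (2 * l + 1) := fun i => ⟨2 * i + 1, by omega⟩
  have hfe : ∀ j, f (X (e j)) < 0 := fun j => by
    have := hfX (e j)
    rw [(show Even (2 * (j : ℕ)) by simp).neg_one_pow, one_mul] at this
    exact neg_of_mul_pos_right this hX0.le
  have hfo : ∀ i, 0 < f (X (o i)) := fun i => by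
    have := hfX (o i)
    rw [(show Odd (2 * (i : ℕ) + 1) by simp).neg_one_pow, neg_one_mul] at this
    exact pos_of_mul_pos_right this (by linarith)
  -- `s` and `X ∘ e` both enumerate the negative atoms increasingly, `t` and `X ∘ o` the positive
  -- ones
  have hse : s = X ∘ e := by
    have hcard : #(univ.image s) = l + 1 := by simp [card_image_of_injective _ hs.injective]
    refine (orderEmbOfFin_unique hcard (fun j => mem_image_of_mem s (mem_univ j)) hs).trans
      (orderEmbOfFin_unique hcard (f := X ∘ e) (fun j => ?_)
        (hX.comp fun a b hab => Fin.mk_lt_mk.2 (by omega))).symm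
    obtain ⟨i, hi⟩ | ⟨j', hj'⟩ := hXst (Set.mem_range_self (e j))
    · exact absurd (hfe j) (hi ▸ (hft i).not_gt)
    · exact mem_image.2 ⟨j', mem_univ _, hj'⟩
  have hto : t = X ∘ o := by
    have hcard : #(univ.image t) = l := by simp [card_image_of_injective _ ht.injective]
    refine (orderEmbOfFin_unique hcard (fun i => mem_image_of_mem t (mem_univ i)) ht).trans
      (orderEmbOfFin_unique hcard (f := X ∘ o) (fun i => ?_)
        (hX.comp fun a b hab => Fin.mk_lt_mk.2 (by omega))).symm
    obtain ⟨i', hi'⟩ | ⟨j, hj⟩ := hXst (Set.mem_range_self (o i))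
    · exact mem_image.2 ⟨i', mem_univ _, hi'⟩
    · exact absurd (hfo i) (hj ▸ (hfs j).not_gt)
  intro i
  rw [hse, hto]
  exact ⟨hX (by simp [e, o, Fin.lt_def]), hX (by simp [e, o, Fin.lt_def]; omega)⟩

theorem principal_representations_interlace_general
    (l : ℕ) (a b : ℝ) (hab : a < b) (u : Fin (2 * l) → ℝ → ℝ)
    (hcont : ∀ j, ContinuousOn (u j) (Set.Icc a b))
    (hcheb : ∀ c : Fin (2 * l) → ℝ, c ≠ 0 →
      ∀ t : Fin (2 * l) → ℝ, StrictMono t → (∀ i, t i ∈ Set.Icc a b) →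
        ¬ (∀ i, ∑ j, c j * u j (t i) = 0))
    (c : Fin (2 * l) → ℝ)
    -- lower principal representation: l interior roots
    (t : Fin l → ℝ) (lam : Fin l → ℝ)
    (ht : StrictMono t) (htab : ∀ i, t i ∈ Set.Ioo a b)
    (hlam : ∀ i, 0 < lam i)
    (hlower : ∀ j, c j = ∑ i, lam i * u j (t i))
    -- upper principal representation: l + 1 roots including both endpoints
    (s : Fin (l + 1) → ℝ) (mu : Fin (l + 1) → ℝ)
    (hs : StrictMono s) (hsab : ∀ i, s i ∈ Set.Icc a b)
    (hsa : s 0 = a)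
    (hmu : ∀ i, 0 < mu i)
    (hupper : ∀ j, c j = ∑ i, mu i * u j (s i)) :
    ∀ i : Fin l, s i.castSucc < t i ∧ t i < s i.succ := by
  classical
  have hu : IsChebyshevSystem u (Set.Icc a b) := hcheb
  set ν := pointMasses (Sum.elim t s) (Sum.elim lam (-mu))
  have hνu : Finsupp.linearCombination ℝ (Function.swap u) ν = 0 := by
    ext j
    simp [ν, linearCombination_pointMasses, Fintype.sum_sum_type, ← hlower, ← hupper]
  have hνts : ↑ν.support ⊆ Set.range t ∪ Set.range s := by
    simpa using support_pointMasses_subset_range (Sum.elim t s) (Sum.elim lam (-mu))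
  have hνI : ↑ν.support ⊆ Set.Icc a b := hνts.trans <| Set.union_subset
    (Set.range_subset_iff.2 fun i => Set.Ioo_subset_Icc_self (htab i)) (Set.range_subset_iff.2 hsab)
  have hνa : ν (s 0) = -mu 0 := by
    refine pointMasses_apply_of_forall_eq_imp (x := Sum.elim t s) _ (i := .inr 0) fun k hk => ?_
    cases k with
    | inl i => exact absurd (hk.trans hsa) (htab i).1.ne'
    | inr j => exact congrArg _ (hs.injective hk)
  have hcard : #ν.support = 2 * l + 1 :=
    le_antisymm ((card_support_pointMasses_le _ _).trans (by simp; omega))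
      (hu.lt_card_support (Set.Icc_infinite hab) hνI hνu fun h => by
        simp [h] at hνa; linarith [hmu 0])
  have hinj : Function.Injective (Sum.elim t s) :=
    injective_of_card_le_card_support_pointMasses (w := Sum.elim lam (-mu))
      (le_of_eq_of_le (by simp; omega) hcard.ge)
  have hνx : ∀ k, ν (Sum.elim t s k) = Sum.elim lam (-mu) k := pointMasses_apply_of_injective hinj _
  set X := ν.support.orderEmbOfFin hcard
  have hX0 : X 0 = s 0 := orderEmbOfFin_zero_eq hcard (by simp [hνa, (hmu 0).ne'])
    fun z hz => hsa ▸ (hνI hz).1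
  refine interlace_of_neg_one_pow_mul_pos X.strictMono hs ht (by rwa [range_orderEmbOfFin])
    (hu.neg_one_pow_mul_pos_of_card_support_eq (convex_Icc a b) hcont hνI hcard hνu)
    (by rw [hX0, hνa]; linarith [hmu 0])
    (fun j => (hνx (.inr j)).trans_lt (neg_neg_of_pos (hmu j)))
    (fun i => (hlam i).trans_eq (hνx (.inl i)).symm)

/-- Interlacing of the two principal representations for odd `n = 2l - 1`:
the `l` interior roots `t` of the lower principal representation and the
`l + 1` roots `s` of the upper principal representation (which include both
endpoints) of the same moment vector strictly interlace:
`s i < t i < s (i+1)`. -/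
theorem principal_representations_interlace
    (l : ℕ) (hl : 0 < l) (a b : ℝ) (hab : a < b) (u : Fin (2 * l) → ℝ → ℝ)
    (hcont : ∀ j, ContinuousOn (u j) (Set.Icc a b))
    (hcheb : ∀ c : Fin (2 * l) → ℝ, c ≠ 0 →
      ∀ t : Fin (2 * l) → ℝ, StrictMono t → (∀ i, t i ∈ Set.Icc a b) →
        ¬ (∀ i, ∑ j, c j * u j (t i) = 0))
    (c : Fin (2 * l) → ℝ)
    -- lower principal representation: l interior roots
    (t : Fin l → ℝ) (lam : Fin l → ℝ)
    (ht : StrictMono t) (htab : ∀ i, t i ∈ Set.Ioo a b)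
    (hlam : ∀ i, 0 < lam i)
    (hlower : ∀ j, c j = ∑ i, lam i * u j (t i))
    -- upper principal representation: l + 1 roots including both endpoints
    (s : Fin (l + 1) → ℝ) (mu : Fin (l + 1) → ℝ)
    (hs : StrictMono s) (hsab : ∀ i, s i ∈ Set.Icc a b)
    (hsa : s 0 = a) (hsb : s (Fin.last l) = b)
    (hmu : ∀ i, 0 < mu i)
    (hupper : ∀ j, c j = ∑ i, mu i * u j (s i)) :
    ∀ i : Fin l, s i.castSucc < t i ∧ t i < s i.succ :=
  principal_representations_interlace_general l a b hab u hcont hcheb c t lam ht htab hlam hlower s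
    mu hs hsab hsa hmu hupper
end

section
/- Let $\{u_j\}_{j=0}^n$ be a Chebyshev set on $[a,b]$ and let $\sigma', \sigma''$ be two convex representations of the same moment vector $\mathbf{c}$, each with positive weights and index at most $(n+2)/2$, both having a root at the left endpoint $a$ with weights $\lambda_1'$ and $\lambda_1''$ respectively. If the representations are distinct, then $\lambda_1' \ne \lambda_1''$. -/
/-!
Subtract the two representations: `σ' - σ''` is a signed atomic measure on `[a, b]` whose
moments against every `u j` vanish. If the weights at `a` agree, the atom at `a` cancels, and
the index bounds leave at most `n + 1` atoms. For a Chebyshev system the vectors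
`(u₀(x), …, uₙ(x))` at any `n + 1` distinct points are linearly independent, so `σ' - σ'' = 0`;
an atomic measure with strictly increasing nodes and nonzero weights determines its nodes and
weights, so the representations coincide.
-/

open Finset

def ChebyshevOn {m : ℕ} (u : Fin m → ℝ → ℝ) (s : Set ℝ) : Prop :=
  ∀ c : Fin m → ℝ, c ≠ 0 → ∀ t : Fin m → ℝ, StrictMono t → (∀ i, t i ∈ s) →
    ¬ ∀ i, ∑ j, c j * u j (t i) = 0

namespace ChebyshevOn

variable {m : ℕ} {u : Fin m → ℝ → ℝ} {s : Set ℝ}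

theorem linearIndependent_comp (hu : ChebyshevOn u s) {e : Fin m → ℝ} (he : StrictMono e)
    (hes : ∀ i, e i ∈ s) : LinearIndependent ℝ (fun i j => u j (e i)) := by
  set M : Matrix (Fin m) (Fin m) ℝ := Matrix.of fun i j => u j (e i)
  change LinearIndependent ℝ M.row
  rw [Matrix.linearIndependent_rows_iff_isUnit, ← Matrix.mulVec_injective_iff_isUnit]
  refine (injective_iff_map_eq_zero M.mulVecLin).2 fun c hc => ?_
  by_contra hc0
  exact hu c hc0 e he hes fun i => by
    simpa [M, Matrix.mulVec, dotProduct, mul_comm] using congrFun hc i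

theorem linearIndepOn (hu : ChebyshevOn u s) (hs : s.Infinite) {T : Set ℝ} (hTs : T ⊆ s)
    (hT : T.Finite) (hcard : T.ncard ≤ m) : LinearIndepOn ℝ (fun x j => u j x) T := by
  -- pad `T` to exactly `m` points, where the collocation matrix is square
  obtain ⟨W, hTW, hWs, hWcard⟩ := hs.exists_superset_ncard_eq hTs hT hcard
  rcases m.eq_zero_or_pos with rfl | hm
  · rw [(Set.ncard_eq_zero hT).1 (by omega)]
    exact linearIndepOn_empty ℝ _
  have hW : W.Finite := Set.finite_of_ncard_pos (hWcard ▸ hm)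
  let e := hW.toFinset.orderEmbOfFin (by rw [← Set.ncard_eq_toFinset_card W hW, hWcard])
  have he : Set.range e = W := by simp [e, Finset.range_orderEmbOfFin]
  have hes : ∀ i, e i ∈ s := fun i => hWs (he ▸ Set.mem_range_self i)
  have hind : LinearIndepOn ℝ (fun x j => u j x) (Set.range e) :=
    (linearIndepOn_range_iff e.injective _).2 (hu.linearIndependent_comp e.strictMono hes)
  exact hind.mono (he.symm ▸ hTW)

theorem eq_zero_of_linearCombination_eq_zero (hu : ChebyshevOn u s) (hs : s.Infinite)
    {μ : ℝ →₀ ℝ} (hμs : ↑μ.support ⊆ s) (hcard : #μ.support ≤ m)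
    (hμ : Finsupp.linearCombination ℝ (fun x j => u j x) μ = 0) : μ = 0 :=
  linearIndepOn_iff.1
    (hu.linearIndepOn hs hμs μ.support.finite_toSet (by rwa [Set.ncard_coe_finset])) μ
    (Finsupp.mem_supported_support ℝ μ) hμ

end ChebyshevOn

section AtomicMeasure

variable {α R : Type*} [Semiring R] {p q : ℕ}

/-- The discrete measure `∑ i, w i • δ (t i)`, as a finitely supported function. -/
noncomputable def atomicMeasure (t : Fin p → α) (w : Fin p → R) : α →₀ R :=
  ∑ i, Finsupp.single (t i) (w i)

theorem atomicMeasure_apply [DecidableEq α] (t : Fin p → α) (w : Fin p → R) (x : α) :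
    atomicMeasure t w x = ∑ i, if t i = x then w i else 0 := by
  simp [atomicMeasure, Finsupp.finsetSum_apply, Finsupp.single_apply]

theorem atomicMeasure_apply_apply {t : Fin p → α} (ht : Function.Injective t) (w : Fin p → R)
    (i : Fin p) : atomicMeasure t w (t i) = w i := by
  classical
  simp [atomicMeasure_apply, ht.eq_iff]

theorem support_atomicMeasure [DecidableEq α] {t : Fin p → α} (ht : Function.Injective t)
    {w : Fin p → R} (hw : ∀ i, w i ≠ 0) : (atomicMeasure t w).support = univ.image t := by
  ext x
  by_cases hx : x ∈ Set.range t
  · obtain ⟨i, rfl⟩ := hx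
    simp [atomicMeasure_apply_apply ht, hw]
  · simp_all [atomicMeasure_apply]

theorem coe_support_atomicMeasure {t : Fin p → α} (ht : Function.Injective t) {w : Fin p → R}
    (hw : ∀ i, w i ≠ 0) : ((atomicMeasure t w).support : Set α) = Set.range t := by
  classical
  simp [support_atomicMeasure ht hw]

theorem card_support_atomicMeasure {t : Fin p → α} (ht : Function.Injective t) {w : Fin p → R}
    (hw : ∀ i, w i ≠ 0) : #(atomicMeasure t w).support = p := by
  classical
  simp [support_atomicMeasure ht hw, card_image_of_injective _ ht]

theorem linearCombination_atomicMeasure {M : Type*} [AddCommMonoid M] [Module R M]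
    (v : α → M) (t : Fin p → α) (w : Fin p → R) :
    Finsupp.linearCombination R v (atomicMeasure t w) = ∑ i, w i • v (t i) := by
  simp [atomicMeasure]

theorem exists_eq_of_atomicMeasure_eq [LinearOrder α] {t : Fin p → α} {t' : Fin q → α}
    {w : Fin p → R} {w' : Fin q → R} (ht : StrictMono t) (ht' : StrictMono t')
    (hw : ∀ i, w i ≠ 0) (hw' : ∀ i, w' i ≠ 0) (h : atomicMeasure t w = atomicMeasure t' w') :
    ∃ h : p = q, ∀ i, t i = t' (Fin.cast h i) ∧ w i = w' (Fin.cast h i) := by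
  have hpq : p = q := by
    rw [← card_support_atomicMeasure ht.injective hw, h,
      card_support_atomicMeasure ht'.injective hw']
  subst hpq
  have htt' : t = t' := ht.range_inj ht' |>.1 <| by
    rw [← coe_support_atomicMeasure ht.injective hw, h,
      coe_support_atomicMeasure ht'.injective hw']
  subst htt'
  refine ⟨rfl, fun i => ⟨rfl, ?_⟩⟩
  rw [Fin.cast_eq_self, ← atomicMeasure_apply_apply ht.injective w, h,
    atomicMeasure_apply_apply ht.injective]

end AtomicMeasure

/-- `2 * #A - [a ∈ A] - [b ∈ A]` is twice the index of a representation with node set `A`. -/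
theorem card_erase_union_le {α : Type*} [DecidableEq α] {A B : Finset α} {a b : α} {k : ℕ}
    (hab : a ≠ b) (haA : a ∈ A) (haB : a ∈ B)
    (hA : 2 * #A ≤ k + 1 + (if a ∈ A then 1 else 0) + if b ∈ A then 1 else 0)
    (hB : 2 * #B ≤ k + 1 + (if a ∈ B then 1 else 0) + if b ∈ B then 1 else 0) :
    #((A ∪ B).erase a) ≤ k := by
  have hunion := card_union_add_card_inter A B
  have herase := card_erase_of_mem (mem_union_left B haA)
  by_cases hbA : b ∈ A <;> by_cases hbB : b ∈ B <;>
    simp only [haA, haB, hbA, hbB, if_true, if_false] at hA hB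
  · have : #{a, b} ≤ #(A ∩ B) := card_le_card (by simp [insert_subset_iff, *])
    rw [card_pair hab] at this
    omega
  all_goals
    have : 1 ≤ #(A ∩ B) := card_pos.2 ⟨a, mem_inter.2 ⟨haA, haB⟩⟩
    omega

open Classical in
theorem endpoint_weights_differ_general
    (n : ℕ) (a b : ℝ) (hab : a < b) (u : Fin (n + 1) → ℝ → ℝ)
    (hcheb : ∀ c : Fin (n + 1) → ℝ, c ≠ 0 →
      ∀ t : Fin (n + 1) → ℝ, StrictMono t → (∀ i, t i ∈ Set.Icc a b) →
        ¬ (∀ i, ∑ j, c j * u j (t i) = 0))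
    (c : Fin (n + 1) → ℝ)
    (p q : ℕ) (hp : 0 < p) (hq : 0 < q)
    (t' : Fin p → ℝ) (lam' : Fin p → ℝ)
    (t'' : Fin q → ℝ) (lam'' : Fin q → ℝ)
    (ht' : StrictMono t') (ht'ab : ∀ i, t' i ∈ Set.Icc a b)
    (ht'' : StrictMono t'') (ht''ab : ∀ i, t'' i ∈ Set.Icc a b)
    (hlam' : ∀ i, 0 < lam' i) (hlam'' : ∀ i, 0 < lam'' i)
    (hrep' : ∀ j, c j = ∑ i, lam' i * u j (t' i))
    (hrep'' : ∀ j, c j = ∑ i, lam'' i * u j (t'' i))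
    (hidx' : 2 * p ≤ n + 2 + (if a ∈ Set.range t' then 1 else 0)
        + (if b ∈ Set.range t' then 1 else 0))
    (hidx'' : 2 * q ≤ n + 2 + (if a ∈ Set.range t'' then 1 else 0)
        + (if b ∈ Set.range t'' then 1 else 0))
    (ha' : t' ⟨0, hp⟩ = a) (ha'' : t'' ⟨0, hq⟩ = a)
    (hne : ¬ (∃ h : p = q, ∀ i : Fin p,
      t' i = t'' (Fin.cast h i) ∧ lam' i = lam'' (Fin.cast h i))) :
    lam' ⟨0, hp⟩ ≠ lam'' ⟨0, hq⟩ := by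
  intro hlam
  set σ' := atomicMeasure t' lam'
  set σ'' := atomicMeasure t'' lam''
  have hw' : ∀ i, lam' i ≠ 0 := fun i => (hlam' i).ne'
  have hw'' : ∀ i, lam'' i ≠ 0 := fun i => (hlam'' i).ne'
  have hrange' : (σ'.support : Set ℝ) = Set.range t' :=
    coe_support_atomicMeasure ht'.injective hw'
  have hrange'' : (σ''.support : Set ℝ) = Set.range t'' :=
    coe_support_atomicMeasure ht''.injective hw''
  have hμa : (σ' - σ'') a = 0 := by
    rw [Finsupp.sub_apply, ← ha', atomicMeasure_apply_apply ht'.injective, ha', ← ha'',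
      atomicMeasure_apply_apply ht''.injective, hlam, sub_self]
  have hsub : (σ' - σ'').support ⊆ (σ'.support ∪ σ''.support).erase a := fun x hx =>
    mem_erase.2 ⟨by rintro rfl; exact Finsupp.mem_support_iff.1 hx hμa, Finsupp.support_sub hx⟩
  have hcard : #((σ'.support ∪ σ''.support).erase a) ≤ n + 1 := by
    have hp' : #σ'.support = p := card_support_atomicMeasure ht'.injective hw'
    have hq' : #σ''.support = q := card_support_atomicMeasure ht''.injective hw''
    simp only [← hrange', ← hrange'', mem_coe] at hidx' hidx''
    exact card_erase_union_le hab.ne (mem_coe.1 (hrange' ▸ ⟨_, ha'⟩))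
      (mem_coe.1 (hrange'' ▸ ⟨_, ha''⟩)) (by omega) (by omega)
  have hab' : ↑(σ' - σ'').support ⊆ Set.Icc a b := by
    refine (coe_subset.2 Finsupp.support_sub).trans ?_
    rw [coe_union, hrange', hrange'']
    exact Set.union_subset (Set.range_subset_iff.2 ht'ab) (Set.range_subset_iff.2 ht''ab)
  have hmoments : Finsupp.linearCombination ℝ (fun x j => u j x) (σ' - σ'') = 0 := by
    ext j
    simp [σ', σ'', linearCombination_atomicMeasure, ← hrep', ← hrep'']
  have hσ : σ' = σ'' := sub_eq_zero.1 <|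
    ChebyshevOn.eq_zero_of_linearCombination_eq_zero hcheb (Set.Icc_infinite hab) hab'
      ((card_le_card hsub).trans hcard) hmoments
  exact hne (exists_eq_of_atomicMeasure_eq ht' ht'' hw' hw'' hσ)

open Classical in
/-- Two distinct positive-weight representations of the same moment vector over
a Chebyshev set, each of index at most `(n+2)/2` and each having a root at the
left endpoint `a`, must carry different weights at `a`. -/
theorem endpoint_weights_differ
    (n : ℕ) (a b : ℝ) (hab : a < b) (u : Fin (n + 1) → ℝ → ℝ)
    (hcont : ∀ j, ContinuousOn (u j) (Set.Icc a b))
    (hcheb : ∀ c : Fin (n + 1) → ℝ, c ≠ 0 →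
      ∀ t : Fin (n + 1) → ℝ, StrictMono t → (∀ i, t i ∈ Set.Icc a b) →
        ¬ (∀ i, ∑ j, c j * u j (t i) = 0))
    (c : Fin (n + 1) → ℝ)
    (p q : ℕ) (hp : 0 < p) (hq : 0 < q)
    (t' : Fin p → ℝ) (lam' : Fin p → ℝ)
    (t'' : Fin q → ℝ) (lam'' : Fin q → ℝ)
    (ht' : StrictMono t') (ht'ab : ∀ i, t' i ∈ Set.Icc a b)
    (ht'' : StrictMono t'') (ht''ab : ∀ i, t'' i ∈ Set.Icc a b)
    (hlam' : ∀ i, 0 < lam' i) (hlam'' : ∀ i, 0 < lam'' i)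
    (hrep' : ∀ j, c j = ∑ i, lam' i * u j (t' i))
    (hrep'' : ∀ j, c j = ∑ i, lam'' i * u j (t'' i))
    (hidx' : 2 * p ≤ n + 2 + (if a ∈ Set.range t' then 1 else 0)
        + (if b ∈ Set.range t' then 1 else 0))
    (hidx'' : 2 * q ≤ n + 2 + (if a ∈ Set.range t'' then 1 else 0)
        + (if b ∈ Set.range t'' then 1 else 0))
    (ha' : t' ⟨0, hp⟩ = a) (ha'' : t'' ⟨0, hq⟩ = a)
    (hne : ¬ (∃ h : p = q, ∀ i : Fin p,
      t' i = t'' (Fin.cast h i) ∧ lam' i = lam'' (Fin.cast h i))) :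
    lam' ⟨0, hp⟩ ≠ lam'' ⟨0, hq⟩ :=
  endpoint_weights_differ_general n a b hab u hcheb c p q hp hq t' lam' t'' lam'' ht' ht'ab ht''
    ht''ab hlam' hlam'' hrep' hrep'' hidx' hidx'' ha' ha'' hne
end
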